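/- Fix an integer N ≥ 1 and λ ∈ ℝ. In ℝ[[X]] let T_{N,λ} = ∑_{n=0}^{∞} (∏_{j=0}^{n-1} (λ − N − j)) · (N!/(N+n)!) · X^n and let f = T_{N,λ}^{-1} (the generating function ∑_{n≥0} γ_{N,n}(λ) X^n/n! of the hypergeometric degenerate Cauchy numbers). Define P_n(X) = (N+n)!/N! and Q_n(X) = ((N+n)!/N!) · ∑_{i=0}^{n} (∏_{j=0}^{i-1} (λ − N − j)) · (N!/(N+i)!) · X^i. Then: (i) for all n ≥ 2, P_n(X) = (N+n + (λ−N−n+1)X) P_{n-1}(X) − (N+n−1)(λ−N−n+1) X P_{n-2}(X), and the same recurrence holds for Q_n; (ii) for all n ≥ 0, Q_n(X) · f ≡ P_n(X) (mod X^{n+1}). -/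

import Mathlib

open Finset PowerSeries

/-!
Write `c n = (N+n)!/N!` and `t i = (∏_{j<i} (λ-N-j)) N!/(N+i)!`, so that `P n = c n`,
`Q n = c n · ∑_{i≤n} t i X^i` and `T = ∑ t i X^i`. Both recurrences are instances of one ring
identity: `c n · S n` satisfies the three-term recurrence as soon as `c (n+1) = (N+n+1) c n` and
the increments of `S` obey `(N+n+2)(S (n+2) - S (n+1)) = (λ-N-n-1) X (S (n+1) - S n)`. For `P` the
increments vanish; for `Q` they are `t i X^i`, and the condition is the ratio `t (i+1) / t i`.
Part (ii) holds because the sum in `Q n` is the truncation of `T` at degree `n` and `T f = 1`.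
-/

theorem mul_three_term_recurrence {A : Type*} [CommRing A] {a b₁ b₂ x c₀ c₁ c₂ S₀ S₁ S₂ : A}
    (hc₁ : c₁ = b₁ * c₀) (hc₂ : c₂ = b₂ * c₁) (hS : b₂ * (S₂ - S₁) = a * x * (S₁ - S₀)) :
    c₂ * S₂ = (b₂ + a * x) * (c₁ * S₁) - b₁ * a * x * (c₀ * S₀) := by
  linear_combination S₂ * hc₂ - a * x * S₀ * hc₁ + c₁ * hS

theorem PowerSeries.coe_trunc_eq_sum_range {R : Type*} [CommSemiring R] (φ : R⟦X⟧) (n : ℕ) :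
    (trunc n φ : R⟦X⟧) = ∑ i ∈ range n, C (coeff i φ) * X ^ i := by
  rw [← Polynomial.eval₂_C_X_eq_coe, eval₂_trunc_eq_sum_range]

theorem PowerSeries.coeff_coe_trunc_mul {R : Type*} [CommSemiring R] {k n : ℕ} (hk : k < n)
    (φ ψ : R⟦X⟧) : coeff k ((trunc n φ : R⟦X⟧) * ψ) = coeff k (φ * ψ) := by
  rw [← coeff_coe_trunc_of_lt hk, trunc_trunc_mul, coeff_coe_trunc_of_lt hk]

theorem factorial_add_succ_div_factorial (N n : ℕ) :
    ((N + (n + 1)).factorial : ℝ) / N.factorial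
      = ((N : ℝ) + n + 1) * (((N + n).factorial : ℝ) / N.factorial) := by
  rw [← add_assoc, Nat.factorial_succ]
  push_cast
  ring

theorem hypergeometric_coeff_succ (N i : ℕ) (l : ℝ) :
    ((N : ℝ) + i + 1) * ((∏ j ∈ range (i + 1), (l - (N : ℝ) - j)) *
        ((N.factorial : ℝ) / ((N + (i + 1)).factorial : ℝ)))
      = (l - N - i) * ((∏ j ∈ range i, (l - (N : ℝ) - j)) *
        ((N.factorial : ℝ) / ((N + i).factorial : ℝ))) := by
  have hfac : ((N + i).factorial : ℝ) ≠ 0 := by positivity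
  rw [prod_range_succ, ← add_assoc, Nat.factorial_succ]
  push_cast
  field_simp

theorem statement6_general (N : ℕ) (l : ℝ)
    (T f : PowerSeries ℝ)
    (hT : T = PowerSeries.mk fun n =>
      (∏ j ∈ Finset.range n, (l - (N : ℝ) - j)) *
        ((N.factorial : ℝ) / ((N + n).factorial : ℝ)))
    (hf : f = T⁻¹)
    (P Q : ℕ → PowerSeries ℝ)
    (hP : ∀ n, P n = PowerSeries.C (((N + n).factorial : ℝ) / (N.factorial : ℝ)))
    (hQ : ∀ n, Q n = PowerSeries.C (((N + n).factorial : ℝ) / (N.factorial : ℝ)) *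
      ∑ i ∈ Finset.range (n + 1),
        PowerSeries.C ((∏ j ∈ Finset.range i, (l - (N : ℝ) - j)) *
          ((N.factorial : ℝ) / ((N + i).factorial : ℝ))) * PowerSeries.X ^ i) :
    (∀ n : ℕ,
      P (n + 2) = (PowerSeries.C ((N : ℝ) + n + 2) +
            PowerSeries.C (l - (N : ℝ) - n - 1) * PowerSeries.X) * P (n + 1)
          - PowerSeries.C (((N : ℝ) + n + 1) * (l - (N : ℝ) - n - 1)) *
              PowerSeries.X * P n ∧
      Q (n + 2) = (PowerSeries.C ((N : ℝ) + n + 2) +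
            PowerSeries.C (l - (N : ℝ) - n - 1) * PowerSeries.X) * Q (n + 1)
          - PowerSeries.C (((N : ℝ) + n + 1) * (l - (N : ℝ) - n - 1)) *
              PowerSeries.X * Q n) ∧
    (∀ n : ℕ, ∀ k ≤ n,
      PowerSeries.coeff k (Q n * f) = PowerSeries.coeff k (P n)) := by
  have hc₁ : ∀ n : ℕ, C (((N + (n + 1)).factorial : ℝ) / N.factorial)
      = C ((N : ℝ) + n + 1) * C (((N + n).factorial : ℝ) / N.factorial) := fun n => by
    rw [← map_mul, factorial_add_succ_div_factorial]
  have hc₂ : ∀ n : ℕ, C (((N + (n + 2)).factorial : ℝ) / N.factorial)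
      = C ((N : ℝ) + n + 2) * C (((N + (n + 1)).factorial : ℝ) / N.factorial) := fun n => by
    rw [← map_mul, factorial_add_succ_div_factorial N (n + 1)]
    push_cast
    ring_nf
  refine ⟨fun n => ⟨?_, ?_⟩, fun n k hk => ?_⟩
  · simpa only [hP, mul_one, map_mul] using
      mul_three_term_recurrence (S₀ := 1) (S₁ := 1) (S₂ := 1) (hc₁ n) (hc₂ n) (by simp)
  · rw [hQ, hQ, hQ, map_mul]
    refine mul_three_term_recurrence (hc₁ n) (hc₂ n) ?_
    rw [sum_range_succ _ (n + 2), add_sub_cancel_left, sum_range_succ _ (n + 1),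
      add_sub_cancel_left]
    have hratio := congrArg C (hypergeometric_coeff_succ N (n + 1) l)
    simp only [map_mul, map_sub, map_add, map_natCast, map_one, map_ofNat, Nat.cast_add,
      Nat.cast_one] at hratio ⊢
    linear_combination X ^ (n + 2) * hratio
  · have hT₀ : constantCoeff T ≠ 0 := by simp [hT, Nat.factorial_ne_zero]
    have hQ_trunc :
        Q n = C (((N + n).factorial : ℝ) / N.factorial) * (trunc (n + 1) T : ℝ⟦X⟧) := by
      rw [hQ, coe_trunc_eq_sum_range, hT]
      simp only [coeff_mk]
    rw [hQ_trunc, hP, mul_assoc, coeff_C_mul, coeff_coe_trunc_mul (Nat.lt_succ_of_le hk), hf,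
      PowerSeries.mul_inv_cancel _ hT₀, ← coeff_C_mul, mul_one]

/-- Continued fraction convergents for the generating function of the
hypergeometric degenerate Cauchy numbers `γ_{N,n}(λ)`.  With
`T = ∑_n (∏_{j=0}^{n-1}(λ-N-j)) · (N!/(N+n)!) · X^n`, `f = T⁻¹`,
`P n = (N+n)!/N!` and `Q n = ((N+n)!/N!) · ∑_{i=0}^n (∏_{j<i}(λ-N-j)) (N!/(N+i)!) X^i`:
(i) for all `n ≥ 2` (written at index `n+2`) both satisfy
`P_n = (N+n + (λ-N-n+1)X) P_{n-1} - (N+n-1)(λ-N-n+1) X P_{n-2}`;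
(ii) for all `n ≥ 0`, `Q n · f ≡ P n (mod X^{n+1})`. -/
theorem statement6 (N : ℕ) (hN : 1 ≤ N) (l : ℝ)
    (T f : PowerSeries ℝ)
    (hT : T = PowerSeries.mk fun n =>
      (∏ j ∈ Finset.range n, (l - (N : ℝ) - j)) *
        ((N.factorial : ℝ) / ((N + n).factorial : ℝ)))
    (hf : f = T⁻¹)
    (P Q : ℕ → PowerSeries ℝ)
    (hP : ∀ n, P n = PowerSeries.C (((N + n).factorial : ℝ) / (N.factorial : ℝ)))
    (hQ : ∀ n, Q n = PowerSeries.C (((N + n).factorial : ℝ) / (N.factorial : ℝ)) *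
      ∑ i ∈ Finset.range (n + 1),
        PowerSeries.C ((∏ j ∈ Finset.range i, (l - (N : ℝ) - j)) *
          ((N.factorial : ℝ) / ((N + i).factorial : ℝ))) * PowerSeries.X ^ i) :
    (∀ n : ℕ,
      P (n + 2) = (PowerSeries.C ((N : ℝ) + n + 2) +
            PowerSeries.C (l - (N : ℝ) - n - 1) * PowerSeries.X) * P (n + 1)
          - PowerSeries.C (((N : ℝ) + n + 1) * (l - (N : ℝ) - n - 1)) *
              PowerSeries.X * P n ∧
      Q (n + 2) = (PowerSeries.C ((N : ℝ) + n + 2) +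
            PowerSeries.C (l - (N : ℝ) - n - 1) * PowerSeries.X) * Q (n + 1)
          - PowerSeries.C (((N : ℝ) + n + 1) * (l - (N : ℝ) - n - 1)) *
              PowerSeries.X * Q n) ∧
    (∀ n : ℕ, ∀ k ≤ n,
      PowerSeries.coeff k (Q n * f) = PowerSeries.coeff k (P n)) :=
  statement6_general N l T f hT hf P Q hP hQ
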